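/- For every real t with |t| < 1 and every integer k ≥ 1, the matrix [(I - tB)^{-1} A]^k equals the block matrix whose (U,U) block is V^k, whose (U^c,U) block is W·V^{k-1}, and whose (U,U^c) and (U^c,U^c) blocks are zero, where V = P_{UU} + t P_{UU^c} (I - t P_{U^cU^c})^{-1} P_{U^cU} and W = (I - t P_{U^cU^c})^{-1} P_{U^cU}. -/

import Mathlib

/-!
Reorder `S` as `U ⊕ Uᶜ`. Since `B` vanishes on the `U`-columns, `1 - t • B` is block upper
triangular with diagonal blocks `1` and `1 - t • Pcc`, and `A` vanishes on the `Uᶜ`-columns, so the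
block inverse formula gives `(1 - t • B)⁻¹ * A = fromBlocks V 0 W 0`, whose `k`-th power is
`fromBlocks (V ^ k) 0 (W * V ^ (k - 1)) 0`. The only analytic input is that `1 - t • Pcc` is
invertible: `Pcc` is substochastic, so its `ℓ∞` operator norm is at most `1`, and `|t| < 1`.
-/

open Matrix Finset

section LinftyOpNorm

attribute [local instance] Matrix.linftyOpNormedRing Matrix.linftyOpNormedAlgebra

theorem Matrix.isUnit_one_sub_smul_of_sum_abs_le_one {n : Type*} [Fintype n] [DecidableEq n]
    (M : Matrix n n ℝ) (hM : ∀ i, ∑ j, |M i j| ≤ 1) {t : ℝ} (ht : |t| < 1) :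
    IsUnit (1 - t • M) := by
  have hM_norm : ‖M‖ ≤ 1 := by
    rw [linfty_opNorm_def, ← NNReal.coe_one, NNReal.coe_le_coe]
    refine Finset.sup_le fun i _ => ?_
    rw [← NNReal.coe_le_coe]
    simpa [Real.norm_eq_abs] using hM i
  refine isUnit_one_sub_of_norm_lt_one ?_
  rw [norm_smul, Real.norm_eq_abs]
  nlinarith [norm_nonneg M, abs_nonneg t]

end LinftyOpNorm

theorem Matrix.sum_abs_subtype_le_one_of_nonneg {m S : Type*} [Fintype S] (P : Matrix m S ℝ)
    (hP0 : ∀ i j, 0 ≤ P i j) (hP1 : ∀ i, ∑ j, P i j ≤ 1) (T : Finset S) (i : m) :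
    ∑ j : T, |P i j| ≤ 1 := by
  calc ∑ j : T, |P i j| = ∑ j ∈ T, P i j := by
        rw [← Finset.sum_coe_sort T]
        exact Finset.sum_congr rfl fun j _ => abs_of_nonneg (hP0 i j)
    _ ≤ ∑ j, P i j := Finset.sum_le_univ_sum_of_nonneg (hP0 i)
    _ ≤ 1 := hP1 i

theorem Matrix.fromBlocks_zero_zero_pow {m n R : Type*} [Fintype m] [Fintype n] [DecidableEq m]
    [DecidableEq n] [CommRing R] (V : Matrix m m R) (W : Matrix n m R) {k : ℕ} (hk : 1 ≤ k) :
    fromBlocks V (0 : Matrix m n R) W 0 ^ k = fromBlocks (V ^ k) 0 (W * V ^ (k - 1)) 0 := by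
  induction k, hk using Nat.le_induction with
  | base => simp
  | succ k hk ih =>
    obtain ⟨k, rfl⟩ := Nat.exists_eq_add_of_le' hk
    simp [pow_succ, ih, fromBlocks_multiply, Matrix.mul_assoc]

theorem Matrix.inv_one_sub_smul_fromBlocks_mul {m n R : Type*} [Fintype m] [Fintype n]
    [DecidableEq m] [DecidableEq n] [CommRing R] (t : R) (C : Matrix m n R) (D : Matrix n n R)
    (X : Matrix m m R) (Y : Matrix n m R) (hD : IsUnit (1 - t • D)) :
    (1 - t • fromBlocks 0 C 0 D)⁻¹ * fromBlocks X (0 : Matrix m n R) Y 0 =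
      fromBlocks (X + t • (C * (1 - t • D)⁻¹ * Y)) 0 ((1 - t • D)⁻¹ * Y) 0 := by
  have h_blocks :
      1 - t • fromBlocks (0 : Matrix m m R) C 0 D = fromBlocks 1 (-(t • C)) 0 (1 - t • D) := by
    rw [← fromBlocks_one, fromBlocks_smul, sub_eq_add_neg, fromBlocks_neg, fromBlocks_add]
    simp [sub_eq_add_neg]
  rw [h_blocks, inv_fromBlocks_zero₂₁_of_isUnit_iff _ _ _ (iff_of_true isUnit_one hD),
    fromBlocks_multiply]
  simp [Matrix.mul_assoc, sub_eq_add_neg]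

def Finset.sumComplEquiv {S : Type*} [DecidableEq S] [Fintype S] (U : Finset S) :
    {x // x ∈ U} ⊕ {x // x ∈ Uᶜ} ≃ S :=
  (Equiv.sumCongr (Equiv.refl _) (Equiv.subtypeEquivRight fun _ => Finset.mem_compl)).trans
    (Equiv.sumCompl (· ∈ U))

theorem Matrix.submatrix_sumComplEquiv {S α : Type*} [DecidableEq S] [Fintype S] (U : Finset S)
    (M : Matrix S S α) :
    M.submatrix U.sumComplEquiv U.sumComplEquiv =
      fromBlocks (M.submatrix (↑) (↑)) (M.submatrix (↑) (↑)) (M.submatrix (↑) (↑))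
        (M.submatrix (↑) (↑)) := by
  ext (i | i) (j | j) <;> rfl

theorem stmt6 {S : Type*} [Fintype S] [DecidableEq S]
    (P : Matrix S S ℝ) (hP0 : ∀ i j, 0 ≤ P i j) (hP1 : ∀ i, ∑ j, P i j = 1)
    (U : Finset S) (A B : Matrix S S ℝ)
    (hA : ∀ i j, A i j = if j ∈ U then P i j else 0)
    (hB : ∀ i j, B i j = if j ∉ U then P i j else 0)
    (Puu : Matrix {x // x ∈ U} {x // x ∈ U} ℝ)
    (hPuu : ∀ i j, Puu i j = P i.val j.val)
    (Puc : Matrix {x // x ∈ U} {x // x ∈ Uᶜ} ℝ)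
    (hPuc : ∀ i j, Puc i j = P i.val j.val)
    (Pcu : Matrix {x // x ∈ Uᶜ} {x // x ∈ U} ℝ)
    (hPcu : ∀ i j, Pcu i j = P i.val j.val)
    (Pcc : Matrix {x // x ∈ Uᶜ} {x // x ∈ Uᶜ} ℝ)
    (hPcc : ∀ i j, Pcc i j = P i.val j.val)
    (t : ℝ) (ht : |t| < 1)
    (V : Matrix {x // x ∈ U} {x // x ∈ U} ℝ)
    (hV : V = Puu + t • (Puc * (1 - t • Pcc)⁻¹ * Pcu))
    (W : Matrix {x // x ∈ Uᶜ} {x // x ∈ U} ℝ)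
    (hW : W = (1 - t • Pcc)⁻¹ * Pcu)
    (k : ℕ) (hk : 1 ≤ k) :
    (∀ i j : {x // x ∈ U},
        (((1 - t • B)⁻¹ * A) ^ k) i.val j.val = (V ^ k) i j) ∧
    (∀ (i : {x // x ∈ Uᶜ}) (j : {x // x ∈ U}),
        (((1 - t • B)⁻¹ * A) ^ k) i.val j.val = (W * V ^ (k - 1)) i j) ∧
    (∀ (i : {x // x ∈ U}) (j : {x // x ∈ Uᶜ}),
        (((1 - t • B)⁻¹ * A) ^ k) i.val j.val = 0) ∧
    (∀ (i : {x // x ∈ Uᶜ}) (j : {x // x ∈ Uᶜ}),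
        (((1 - t • B)⁻¹ * A) ^ k) i.val j.val = 0) := by
  have hPcc_unit : IsUnit (1 - t • Pcc) := by
    refine isUnit_one_sub_smul_of_sum_abs_le_one Pcc (fun i => ?_) ht
    simpa only [hPcc] using sum_abs_subtype_le_one_of_nonneg P hP0 (fun i => (hP1 i).le) Uᶜ i
  let φ := reindexAlgEquiv ℝ ℝ U.sumComplEquiv.symm
  have hφ (M : Matrix S S ℝ) : φ M = M.submatrix U.sumComplEquiv U.sumComplEquiv := rfl
  have hφA : φ A = fromBlocks Puu 0 Pcu 0 := by
    rw [hφ, submatrix_sumComplEquiv, fromBlocks_inj]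
    refine ⟨?_, ?_, ?_, ?_⟩ <;> ext i ⟨j, hj⟩ <;> simp [hA, hPuu, hPcu, Finset.mem_compl.mp, hj]
  have hφB : φ B = fromBlocks 0 Puc 0 Pcc := by
    rw [hφ, submatrix_sumComplEquiv, fromBlocks_inj]
    refine ⟨?_, ?_, ?_, ?_⟩ <;> ext i ⟨j, hj⟩ <;> simp [hB, hPuc, hPcc, Finset.mem_compl.mp, hj]
  have hφ_step : φ ((1 - t • B)⁻¹ * A) = fromBlocks V 0 W 0 := by
    have hφ_inv : φ (1 - t • B)⁻¹ = (φ (1 - t • B))⁻¹ := (inv_submatrix_equiv _ _ _).symm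
    rw [map_mul, hφ_inv, map_sub, map_one, map_smul, hφA, hφB,
      inv_one_sub_smul_fromBlocks_mul _ _ _ _ _ hPcc_unit, hV, hW]
  have hφ_pow : φ (((1 - t • B)⁻¹ * A) ^ k) = fromBlocks (V ^ k) 0 (W * V ^ (k - 1)) 0 := by
    rw [map_pow, hφ_step, fromBlocks_zero_zero_pow V W hk]
  exact ⟨fun i j => congr_fun₂ hφ_pow (.inl i) (.inl j),
    fun i j => congr_fun₂ hφ_pow (.inr i) (.inl j),
    fun i j => congr_fun₂ hφ_pow (.inl i) (.inr j),
    fun i j => congr_fun₂ hφ_pow (.inr i) (.inr j)⟩
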